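/- arXiv:1611.06443 — 5 statements merged into one kernel-verified Lean document; each statement's English description precedes it below -/
import Mathlib

section
/- Sufficiency part of the sub-Nyquist radar recovery theorem (Theorem 1, on-grid form): let L ≥ 1, N ≥ 2L, P ≥ 1, and let F_κ be the 2L × N partial Fourier matrix with entries (F_κ)_{k,r} = exp(−2πi·k·r/N) for k ∈ {0,…,2L−1} and r ∈ {0,…,N−1}. If X and X′ are N × P complex matrices each having at most L nonzero entries in total, and F_κ · X = F_κ · X′, then X = X′. In particular, with P = 2L pulses and K = 2L Fourier coefficients per pulse, the K·P = 4L² measurements F_κ X uniquely determine any target scene of L on-grid targets. -/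
/-!
The difference `D = X - X'` has at most `2L` nonzero entries, so each of its columns is a vector
supported on at most `2L` delay indices, and `F_κ D = 0`. The entries of `F_κ` are the powers
`ζ_r ^ k`, `k < 2L`, of the pairwise distinct `N`-th roots of unity `ζ_r = exp(-2πi r/N)`;
restricted to the support of a column this is a square Vandermonde system with distinct nodes,
hence injective, so every column of `D` vanishes.
-/

open Matrix

theorem eq_zero_of_sum_pow_mul_eq_zero_of_ncard_support_le {ι R : Type*} [Fintype ι]
    [CommRing R] [IsDomain R] {z : ι → R} (hz : Function.Injective z) {v : ι → R} {n : ℕ}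
    (hv : (Function.support v).ncard ≤ n) (h : ∀ k : Fin n, ∑ i, z i ^ (k : ℕ) * v i = 0) :
    v = 0 := by
  classical
  let m := Nat.card (Function.support v)
  let e : Fin m ≃ Function.support v := (Finite.equivFin _).symm
  have hm : m ≤ n := (Nat.card_coe_set_eq _).trans_le hv
  have hsum (k : ℕ) : ∑ j, v (e j) * z (e j) ^ k = ∑ i, z i ^ k * v i := by
    rw [Equiv.sum_comp e fun i => v i * z i ^ k,
      ← Finset.sum_subtype {i | v i ≠ 0} (by simp) fun i => v i * z i ^ k,
      Finset.sum_filter_of_ne fun i _ hi => left_ne_zero_of_mul hi]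
    simp only [mul_comm]
  have hw : (fun j => v (e j)) = 0 :=
    eq_zero_of_forall_pow_sum_mul_pow_eq_zero ((hz.comp Subtype.val_injective).comp e.injective)
      fun k => (hsum k).trans (h (Fin.castLE hm k))
  funext i
  by_contra hi
  exact hi (by simpa using congrFun hw (e.symm ⟨i, hi⟩))

theorem IsPrimitiveRoot.injective_pow_fin {M : Type*} [CommMonoid M] {ζ : M} {N : ℕ}
    (hζ : IsPrimitiveRoot ζ N) : Function.Injective fun r : Fin N => ζ ^ (r : ℕ) :=
  fun _ _ h => Fin.ext (hζ.pow_inj (Fin.is_lt _) (Fin.is_lt _) h)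

theorem Complex.injective_inv_exp_two_pi_I_div_pow (N : ℕ) :
    Function.Injective fun r : Fin N =>
      (Complex.exp (2 * Real.pi * Complex.I / N))⁻¹ ^ (r : ℕ) := by
  obtain rfl | hN := eq_or_ne N 0
  · exact fun r => r.elim0
  · exact (Complex.isPrimitiveRoot_exp N hN).inv.injective_pow_fin

theorem Complex.exp_neg_two_pi_I_mul_mul_div_eq_pow_pow (N k r : ℕ) :
    Complex.exp (-(2 * Real.pi * Complex.I * k * r) / N) =
      ((Complex.exp (2 * Real.pi * Complex.I / N))⁻¹ ^ r) ^ k := by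
  rw [← Complex.exp_neg, ← Complex.exp_nat_mul, ← Complex.exp_nat_mul]
  congr 1
  ring

theorem Matrix.ncard_support_col_le {m n α : Type*} [Finite m] [Finite n] [Zero α]
    (X : Matrix m n α) (j : n) :
    (Function.support fun i => X i j).ncard ≤ {q : m × n | X q.1 q.2 ≠ 0}.ncard :=
  Set.ncard_le_ncard_of_injOn (fun i => (i, j)) (fun _ hi => hi)
    (fun _ _ _ _ h => congrArg Prod.fst h) (Set.toFinite _)

theorem Matrix.ncard_support_col_sub_le {m n α : Type*} [Finite m] [Finite n] [AddGroup α]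
    (X Y : Matrix m n α) (j : n) :
    (Function.support fun i => (X - Y) i j).ncard ≤
      {q : m × n | X q.1 q.2 ≠ 0}.ncard + {q : m × n | Y q.1 q.2 ≠ 0}.ncard :=
  calc (Function.support fun i => (X - Y) i j).ncard
      ≤ ((Function.support fun i => X i j) ∪ Function.support fun i => Y i j).ncard :=
        Set.ncard_le_ncard (Function.support_sub _ _) (Set.toFinite _)
    _ ≤ _ := (Set.ncard_union_le _ _).trans
        (add_le_add (X.ncard_support_col_le j) (Y.ncard_support_col_le j))

theorem subNyquist_radar_sufficiency_general (L N P : ℕ)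
    (Fκ : Matrix (Fin (2 * L)) (Fin N) ℂ)
    (hF : ∀ (k : Fin (2 * L)) (r : Fin N),
      Fκ k r = Complex.exp (-(2 * Real.pi * Complex.I * (k.val : ℂ) * (r.val : ℂ)) / (N : ℂ)))
    (X X' : Matrix (Fin N) (Fin P) ℂ)
    (hX : {q : Fin N × Fin P | X q.1 q.2 ≠ 0}.ncard ≤ L)
    (hX' : {q : Fin N × Fin P | X' q.1 q.2 ≠ 0}.ncard ≤ L)
    (h : Fκ * X = Fκ * X') : X = X' := by
  set ζ : Fin N → ℂ := fun r => (Complex.exp (2 * Real.pi * Complex.I / N))⁻¹ ^ (r : ℕ)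
  have hFζ (k : Fin (2 * L)) (r : Fin N) : Fκ k r = ζ r ^ (k : ℕ) := by
    rw [hF, Complex.exp_neg_two_pi_I_mul_mul_div_eq_pow_pow]
  have hFD : Fκ * (X - X') = 0 := by rw [Matrix.mul_sub, h, sub_self]
  rw [← sub_eq_zero]
  ext r p
  have hcol : (fun i => (X - X') i p) = 0 :=
    eq_zero_of_sum_pow_mul_eq_zero_of_ncard_support_le
      (Complex.injective_inv_exp_two_pi_I_div_pow N)
      ((ncard_support_col_sub_le X X' p).trans (by omega : _ ≤ 2 * L))
      fun k => by simpa only [mul_apply, hFζ, Matrix.zero_apply] using congrFun₂ hFD k p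
  exact congrFun hcol r

/-- Sufficiency part of Theorem 1 (on-grid form): with `K = 2L` consecutive Fourier
coefficients per pulse, the measurements `F_κ X` uniquely determine any target scene
`X` with at most `L` nonzero entries. -/
theorem subNyquist_radar_sufficiency (L N P : ℕ) (hL : 1 ≤ L) (hN : 2 * L ≤ N) (hP : 1 ≤ P)
    (Fκ : Matrix (Fin (2 * L)) (Fin N) ℂ)
    (hF : ∀ (k : Fin (2 * L)) (r : Fin N),
      Fκ k r = Complex.exp (-(2 * Real.pi * Complex.I * (k.val : ℂ) * (r.val : ℂ)) / (N : ℂ)))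
    (X X' : Matrix (Fin N) (Fin P) ℂ)
    (hX : {q : Fin N × Fin P | X q.1 q.2 ≠ 0}.ncard ≤ L)
    (hX' : {q : Fin N × Fin P | X' q.1 q.2 ≠ 0}.ncard ≤ L)
    (h : Fκ * X = Fκ * X') : X = X' :=
  subNyquist_radar_sufficiency_general L N P Fκ hF X X' hX hX' h
end

section
/- Spark of the consecutive-row partial Fourier matrix: let L ≥ 1 and N ≥ 2L, and let F_κ be the 2L × N matrix with entries (F_κ)_{k,r} = exp(−2πi·k·r/N) for k ∈ {0,…,2L−1}, r ∈ {0,…,N−1}. Then every set of 2L columns of F_κ is linearly independent; equivalently, the only vector in ℂ^N with at most 2L nonzero entries lying in the kernel of F_κ is the zero vector. -/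
/-!
Column `r` of `F_κ` is `(1, z_r, …, z_r ^ (2L - 1))` with `z_r = exp (-2πi r / N)`, and these nodes
are distinct powers of a primitive `N`-th root of unity. Keeping only the first `#s ≤ 2L` entries of
the columns indexed by `s` leaves the rows of a square Vandermonde matrix with distinct nodes, which
is invertible; so those columns are independent, and a vector supported on `s` in the kernel is zero.
-/

open Matrix Function Complex

section Field

variable {K : Type*} [Field K]

theorem linearIndependent_pow_of_card_le {ι : Type*} {z : ι → K} (hz : Injective z)
    {s : Finset ι} {m : ℕ} (hs : s.card ≤ m) :
    LinearIndependent K (fun j : s => fun k : Fin m => z j ^ (k : ℕ)) := by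
  set e : Fin s.card ≃ s := s.equivFin.symm
  have hrows : LinearIndependent K (vandermonde fun i => z (e i)) :=
    linearIndependent_rows_of_det_ne_zero <|
      det_vandermonde_ne_zero_iff.mpr (hz.comp (Subtype.val_injective.comp e.injective))
  refine LinearIndependent.of_comp (LinearMap.funLeft K K (Fin.castLE hs)) ?_
  convert hrows.comp e.symm e.symm.injective with j
  ext k
  change _ = vandermonde _ (s.equivFin k) _
  simp [e]

theorem eq_zero_of_mulVec_eq_zero_of_support_subset {m n : Type*} [Fintype n]
    {A : Matrix m n K} {s : Finset n} (hA : LinearIndependent K (fun j : s => Aᵀ j))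
    {x : n → K} (hxs : support x ⊆ s) (hx : A *ᵥ x = 0) : x = 0 := by
  have hx_off : ∀ r ∉ s, x r = 0 := fun r hr => notMem_support.mp (mt (@hxs r) hr)
  have hsum : ∑ j : s, x j • Aᵀ j = 0 := by
    rw [← hx, mulVec_eq_sum, Finset.sum_coe_sort s (fun j => x j • Aᵀ j)]
    simp only [op_smul_eq_smul]
    exact Finset.sum_subset s.subset_univ fun r _ hr => by rw [hx_off r hr, zero_smul]
  have hcoeff := Fintype.linearIndependent_iff.mp hA _ hsum
  funext r
  by_cases hr : r ∈ s
  · exact hcoeff ⟨r, hr⟩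
  · exact hx_off r hr

end Field

theorem injective_exp_neg_two_pi_I_mul_div (N : ℕ) :
    Injective fun r : Fin N => exp (-(2 * Real.pi * I * (r : ℂ)) / N) := by
  intro a b hab
  have hζ := isPrimitiveRoot_exp N a.pos.ne'
  have hpow : ∀ r : ℕ, exp (-(2 * Real.pi * I * r) / N) = (exp (2 * Real.pi * I / N) ^ r)⁻¹ := by
    intro r
    rw [← exp_nat_mul, ← exp_neg]
    ring_nf
  simp only [hpow, _root_.inv_inj] at hab
  exact Fin.ext (hζ.pow_inj a.2 b.2 hab)

theorem partial_fourier_spark_general (L N : ℕ)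
    (Fκ : Matrix (Fin (2 * L)) (Fin N) ℂ)
    (hF : ∀ (k : Fin (2 * L)) (r : Fin N),
      Fκ k r = Complex.exp (-(2 * Real.pi * Complex.I * (k.val : ℂ) * (r.val : ℂ)) / (N : ℂ))) :
    (∀ s : Finset (Fin N), s.card = 2 * L →
      LinearIndependent ℂ (fun j : s => Fκ.transpose j.val)) ∧
    (∀ x : Fin N → ℂ, (Function.support x).ncard ≤ 2 * L → Fκ.mulVec x = 0 → x = 0) := by
  have hcol : ∀ r : Fin N,
      Fκᵀ r = fun k : Fin (2 * L) => exp (-(2 * Real.pi * I * (r : ℂ)) / N) ^ (k : ℕ) := by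
    intro r
    ext k
    rw [transpose_apply, hF, ← exp_nat_mul]
    ring_nf
  have hcols : ∀ s : Finset (Fin N), s.card ≤ 2 * L →
      LinearIndependent ℂ (fun j : s => Fκᵀ j) := by
    intro s hs
    simp only [hcol]
    exact linearIndependent_pow_of_card_le (injective_exp_neg_two_pi_I_mul_div N) hs
  refine ⟨fun s hs => hcols s hs.le, fun x hx hker => ?_⟩
  have hfin := (support x).toFinite
  refine eq_zero_of_mulVec_eq_zero_of_support_subset (hcols hfin.toFinset ?_) (by simp) hker
  rwa [← Set.ncard_eq_toFinset_card _ hfin]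

/-- Spark of the consecutive-row partial Fourier matrix: every set of `2L` columns of
`F_κ` is linearly independent; equivalently the only `2L`-sparse vector in its kernel
is zero. -/
theorem partial_fourier_spark (L N : ℕ) (hL : 1 ≤ L) (hN : 2 * L ≤ N)
    (Fκ : Matrix (Fin (2 * L)) (Fin N) ℂ)
    (hF : ∀ (k : Fin (2 * L)) (r : Fin N),
      Fκ k r = Complex.exp (-(2 * Real.pi * Complex.I * (k.val : ℂ) * (r.val : ℂ)) / (N : ℂ))) :
    (∀ s : Finset (Fin N), s.card = 2 * L →
      LinearIndependent ℂ (fun j : s => Fκ.transpose j.val)) ∧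
    (∀ x : Fin N → ℂ, (Function.support x).ncard ≤ 2 * L → Fκ.mulVec x = 0 → x = 0) :=
  partial_fourier_spark_general L N Fκ hF
end

section
/- Modified-CS uniqueness for multiple measurement vectors (the paper's extension of the known-partial-support recovery guarantee from single to multiple measurement vectors): let A be an M × N complex matrix, T ⊆ {1,…,N} with |T| = s, and k ≥ 0, and suppose every set of at most 2k + s columns of A is linearly independent. Let U₁, U₂ be N × P complex matrices such that the row support of U_i (the set of indices of nonzero rows) is contained in T ∪ Δ_i for some Δ_i ⊆ {1,…,N} with |Δ_i| ≤ k, for i = 1,2. If A·U₁ = A·U₂, then U₁ = U₂. Consequently, M ≥ 2k + s measurement channels suffice for exact recovery of a jointly k-sparse signal matrix whose additional support T of size s is known a priori. -/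
open Matrix

/-- Modified-CS uniqueness for multiple measurement vectors: if every set of at most
`2k + s` columns of `A` is linearly independent, then a jointly `k`-sparse matrix with
additional known support `T` of size `s` is uniquely determined by its measurements. -/
theorem modifiedCS_MMV_uniqueness (M N P s k : ℕ) (A : Matrix (Fin M) (Fin N) ℂ)
    (T : Finset (Fin N)) (hT : T.card = s)
    (hA : ∀ S : Finset (Fin N), S.card ≤ 2 * k + s →
      LinearIndependent ℂ (fun j : S => A.transpose j.val))
    (U₁ U₂ : Matrix (Fin N) (Fin P) ℂ)
    (h₁ : ∃ Δ : Finset (Fin N), Δ.card ≤ k ∧ {i | U₁ i ≠ 0} ⊆ ↑(T ∪ Δ))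
    (h₂ : ∃ Δ : Finset (Fin N), Δ.card ≤ k ∧ {i | U₂ i ≠ 0} ⊆ ↑(T ∪ Δ))
    (h : A * U₁ = A * U₂) : U₁ = U₂ := by
  obtain ⟨Δ₁, hΔ₁, hs₁⟩ := h₁
  obtain ⟨Δ₂, hΔ₂, hs₂⟩ := h₂
  set S : Finset (Fin N) := T ∪ Δ₁ ∪ Δ₂ with hSdef
  have hcard : S.card ≤ 2 * k + s := by
    have h1 := Finset.card_union_le (T ∪ Δ₁) Δ₂
    have h2 := Finset.card_union_le T Δ₁
    simp only [hSdef]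
    omega
  have hz : ∀ j : Fin N, j ∉ S → U₁ j = 0 ∧ U₂ j = 0 := by
    intro j hj
    constructor
    · by_contra hne
      have := hs₁ hne
      simp only [Finset.coe_union, Set.mem_union, Finset.mem_coe] at this
      exact hj (by simp only [hSdef, Finset.mem_union]; tauto)
    · by_contra hne
      have := hs₂ hne
      simp only [Finset.coe_union, Set.mem_union, Finset.mem_coe] at this
      exact hj (by simp only [hSdef, Finset.mem_union]; tauto)
  have li := Fintype.linearIndependent_iff.mp (hA S hcard)
  have key : ∀ p : Fin P, ∀ j : Fin N, j ∈ S → U₁ j p - U₂ j p = 0 := by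
    intro p j hj
    have hsum : ∑ x : S, (U₁ x.val p - U₂ x.val p) • (A.transpose x.val) = 0 := by
      funext m
      simp only [Finset.sum_apply, Pi.smul_apply, Matrix.transpose_apply,
        smul_eq_mul, Pi.zero_apply]
      have e1 : ∑ x : S, (U₁ x.val p - U₂ x.val p) * A m x.val
          = ∑ x ∈ S, (U₁ x p - U₂ x p) * A m x :=
        Finset.sum_coe_sort S (fun x => (U₁ x p - U₂ x p) * A m x)
      rw [e1]
      have e2 : ∑ x ∈ S, (U₁ x p - U₂ x p) * A m x
          = ∑ x : Fin N, (U₁ x p - U₂ x p) * A m x := by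
        apply Finset.sum_subset (Finset.subset_univ S)
        intro x _ hx
        rcases hz x hx with ⟨h1, h2⟩
        simp [h1, h2]
      rw [e2]
      have := congrFun (congrFun h m) p
      simp only [Matrix.mul_apply] at this
      calc ∑ x : Fin N, (U₁ x p - U₂ x p) * A m x
          = ∑ x : Fin N, A m x * U₁ x p - ∑ x : Fin N, A m x * U₂ x p := by
            rw [← Finset.sum_sub_distrib]; congr 1; funext x; ring
        _ = 0 := by rw [this]; ring
    exact li (fun x => U₁ x.val p - U₂ x.val p) hsum ⟨j, hj⟩
  ext j p
  by_cases hj : j ∈ S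
  · have := key p j hj
    exact sub_eq_zero.mp this
  · rcases hz j hj with ⟨h1, h2⟩
    simp [congrFun h1 p, congrFun h2 p]
end

section
/- Necessity of M ≥ 2k + s channels in modified-CS recovery with known partial support: let k ≥ 1, s ≥ 0, N ≥ 2k + s, P ≥ 1, and let A be any M × N complex matrix with M < 2k + s. Then for any T ⊆ {1,…,N} with |T| = s there exist N × P complex matrices U₁ ≠ U₂ and sets Δ₁, Δ₂ ⊆ {1,…,N} with |Δ_i| ≤ k such that the row support of U_i is contained in T ∪ Δ_i for i = 1,2 and A·U₁ = A·U₂. Hence exact reconstruction of a jointly k-sparse matrix given known interfering support of size s is impossible with fewer than 2k + s measurement channels. -/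
open Matrix

/-- Necessity of `M ≥ 2k + s` channels in modified-CS recovery with known partial
support: with `M < 2k + s` channels, exact reconstruction is impossible. -/
theorem modifiedCS_MMV_necessity (M N P s k : ℕ) (hk : 1 ≤ k) (hN : 2 * k + s ≤ N)
    (hP : 1 ≤ P) (A : Matrix (Fin M) (Fin N) ℂ) (hM : M < 2 * k + s)
    (T : Finset (Fin N)) (hT : T.card = s) :
    ∃ (U₁ U₂ : Matrix (Fin N) (Fin P) ℂ) (Δ₁ Δ₂ : Finset (Fin N)),
      U₁ ≠ U₂ ∧ Δ₁.card ≤ k ∧ Δ₂.card ≤ k ∧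
      {i | U₁ i ≠ 0} ⊆ ↑(T ∪ Δ₁) ∧ {i | U₂ i ≠ 0} ⊆ ↑(T ∪ Δ₂) ∧
      A * U₁ = A * U₂ := by
  classical
  -- choose Δ ⊆ Tᶜ with card 2k
  have hTc : 2 * k ≤ Tᶜ.card := by
    rw [Finset.card_compl, hT, Fintype.card_fin]
    omega
  obtain ⟨Δ, hΔsub, hΔcard⟩ := Finset.exists_subset_card_eq hTc
  obtain ⟨Δ₁, hΔ₁sub, hΔ₁card⟩ : ∃ Δ₁ ⊆ Δ, Δ₁.card = k := by
    apply Finset.exists_subset_card_eq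
    omega
  set Δ₂ : Finset (Fin N) := Δ \ Δ₁ with hΔ₂def
  have hΔ₂card : Δ₂.card = k := by
    rw [hΔ₂def, Finset.card_sdiff_of_subset hΔ₁sub]; omega
  set W : Finset (Fin N) := T ∪ Δ with hWdef
  have hWcard : W.card = 2 * k + s := by
    rw [hWdef, Finset.card_union_of_disjoint]
    · omega
    · exact Finset.disjoint_left.mpr fun a ha hb =>
        (Finset.mem_compl.mp (hΔsub hb)) ha
  -- linear map from functions on W
  let ext : ({i // i ∈ W} → ℂ) → (Fin N → ℂ) := fun y i =>
    if h : i ∈ W then y ⟨i, h⟩ else 0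
  have ext_lin : ∀ (y z : {i // i ∈ W} → ℂ) (c : ℂ),
      ext (y + z) = ext y + ext z ∧ ext (c • y) = c • ext y := by
    intro y z c
    constructor <;> funext i <;> by_cases h : i ∈ W <;> simp [ext, h]
  let f : ({i // i ∈ W} → ℂ) →ₗ[ℂ] (Fin M → ℂ) :=
    { toFun := fun y => A.mulVec (ext y)
      map_add' := fun y z => by
        show A.mulVec (ext (y + z)) = A.mulVec (ext y) + A.mulVec (ext z)
        rw [(ext_lin y z 0).1, Matrix.mulVec_add]
      map_smul' := fun c y => by
        show A.mulVec (ext (c • y)) = c • A.mulVec (ext y)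
        rw [(ext_lin y y c).2, Matrix.mulVec_smul] }
  have hker : LinearMap.ker f ≠ ⊥ := by
    apply LinearMap.ker_ne_bot_of_finrank_lt
    simp only [Module.finrank_pi, Fintype.card_fin]
    rw [show Fintype.card {i // i ∈ W} = W.card from Fintype.card_coe W, hWcard]
    exact hM
  obtain ⟨y, hymem, hyne⟩ := Submodule.exists_mem_ne_zero_of_ne_bot hker
  set x : Fin N → ℂ := ext y with hxdef
  have hAx : A.mulVec x = 0 := hymem
  have hxne : x ≠ 0 := by
    intro h
    apply hyne
    funext j
    have := congrFun h j.1
    simpa [hxdef, ext, j.2] using this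
  have hxsupp : ∀ i, x i ≠ 0 → i ∈ W := by
    intro i hi
    by_contra h
    exact hi (by simp [hxdef, ext, h])
  -- define U₁, U₂
  let U₁ : Matrix (Fin N) (Fin P) ℂ := fun i _ => if i ∈ T ∪ Δ₁ then x i else 0
  let U₂ : Matrix (Fin N) (Fin P) ℂ := fun i _ => if i ∈ T ∪ Δ₁ then 0 else -x i
  have hdiff : ∀ i j, U₁ i j - U₂ i j = x i := by
    intro i j
    simp only [U₁, U₂]
    split
    · ring
    · next h =>
      by_cases hx : x i = 0
      · simp [hx]
      · have hiW := hxsupp i hx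
        ring
  refine ⟨U₁, U₂, Δ₁, Δ₂, ?_, le_of_eq hΔ₁card, le_of_eq hΔ₂card, ?_, ?_, ?_⟩
  · intro h
    apply hxne
    funext i
    have h2 := hdiff i ⟨0, hP⟩
    rw [congrFun (congrFun h i) ⟨0, hP⟩, sub_self] at h2
    exact h2.symm
  · intro i hi
    simp only [Set.mem_setOf_eq] at hi
    obtain ⟨j, hj⟩ := Function.ne_iff.mp hi
    simp only [U₁, Pi.zero_apply] at hj
    by_contra h
    rw [if_neg (by simpa using h)] at hj
    exact hj rfl
  · intro i hi
    simp only [Set.mem_setOf_eq] at hi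
    obtain ⟨j, hj⟩ := Function.ne_iff.mp hi
    simp only [U₂, Pi.zero_apply] at hj
    by_cases hTΔ₁ : i ∈ T ∪ Δ₁
    · rw [if_pos hTΔ₁] at hj; exact absurd rfl hj
    rw [if_neg hTΔ₁, neg_ne_zero] at hj
    have hiW := hxsupp i hj
    simp only [Finset.mem_union, not_or] at hTΔ₁
    simp only [hWdef, Finset.mem_union] at hiW
    have hiΔ : i ∈ Δ := hiW.resolve_left hTΔ₁.1
    simp only [Finset.coe_union, Set.mem_union, Finset.mem_coe]
    exact Or.inr (Finset.mem_sdiff.mpr ⟨hiΔ, hTΔ₁.2⟩)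
  · have hsub : U₁ - U₂ = Matrix.of fun i _ => x i := by
      ext i j
      exact hdiff i j
    have h0 : A * (U₁ - U₂) = 0 := by
      ext m j
      have h1 := congrFun hAx m
      simp only [Matrix.mulVec, dotProduct, Pi.zero_apply] at h1
      rw [Matrix.mul_apply, Matrix.zero_apply,
        Finset.sum_congr rfl (fun i _ => by rw [Matrix.sub_apply, hdiff i j])]
      exact h1
    rw [Matrix.mul_sub, sub_eq_zero] at h0
    exact h0
end

section
/- Support recovery via the continuous-to-finite block: let A be an M × N complex matrix such that every set of at most 2k columns of A is linearly independent. Let x₁, …, x_m ∈ ℂ^N be jointly sparse with joint support S = ⋃_n supp(x_n) satisfying |S| ≤ k, let z_n = A·x_n, let Q = Σ_{n=1}^{m} z_n z_n^H, and let V be any M × r complex matrix with V·V^H = Q. Then: (a) there exists an N × r matrix U₀ with row support contained in S such that A·U₀ = V; and (b) every matrix U that minimizes the number of nonzero rows among all solutions of A·U = V has row support exactly equal to S. -/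
/-!
Let `X` be the matrix with columns `xₙ` and `Z = A X` the one with columns `zₙ`. Then
`V Vᴴ = Q = Z Zᴴ`, and since `B` and `B Bᴴ` have the same column space (they have the same rank),
`V` and `Z` have the same column space: `V = Z C` and `Z = V D`. Thus `U₀ = X C` solves `A U₀ = V`
with rows supported in `S`. A row-sparsest solution `U` has at most `|S| ≤ k` nonzero rows, and
`A (U D) = Z = A X`; as any `2k` columns of `A` are independent, `X = U D`, so `S ⊆ rowSupport U`,
with equality by counting.
-/

open Matrix

namespace Matrix

variable {l m n p R : Type*}

def rowSupport [Zero R] (U : Matrix m n R) : Set m := {i | U i ≠ 0}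

@[simp]
theorem mem_rowSupport [Zero R] {U : Matrix m n R} {i : m} : i ∈ rowSupport U ↔ U i ≠ 0 :=
  Iff.rfl

theorem rowSupport_mul_subset [Fintype m] [NonUnitalNonAssocSemiring R]
    (U : Matrix l m R) (D : Matrix m n R) : rowSupport (U * D) ⊆ rowSupport U := by
  intro i hi hU
  exact hi (by ext j; simp [mul_apply, show ∀ k, U i k = 0 from congrFun hU])

theorem rowSupport_sub_subset [AddGroup R] (Y₁ Y₂ : Matrix m n R) :
    rowSupport (Y₁ - Y₂) ⊆ rowSupport Y₁ ∪ rowSupport Y₂ := by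
  intro i hi
  by_contra h
  simp only [Set.mem_union, mem_rowSupport, not_or, not_not] at h
  exact hi (show Y₁ i - Y₂ i = 0 by rw [h.1, h.2, sub_self])

theorem rowSupport_transpose_of [Zero R] (x : n → m → R) :
    rowSupport (of x)ᵀ = ⋃ k, Function.support (x k) := by
  ext i
  simp [rowSupport, funext_iff]

theorem eq_zero_of_mulVec_eq_zero_of_linearIndependent [Fintype n] [CommRing R]
    {A : Matrix m n R} {F : Finset n} (hA : LinearIndependent R (fun j : F => Aᵀ j))
    {y : n → R} (hy : ∀ i ∉ F, y i = 0) (hAy : A *ᵥ y = 0) : y = 0 := by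
  have hsum : ∑ j : F, y j • Aᵀ j = 0 := by
    rw [Finset.sum_coe_sort F fun j => y j • Aᵀ j,
      Finset.sum_subset (Finset.subset_univ F) fun j _ hj => by simp [hy j hj], ← hAy]
    ext i
    simp [mulVec, dotProduct, mul_comm]
  ext i
  by_cases hi : i ∈ F
  · exact Fintype.linearIndependent_iff.mp hA (fun j => y j) hsum ⟨i, hi⟩
  · exact hy i hi

theorem eq_zero_of_mul_eq_zero_of_ncard_rowSupport_le [Fintype n] [CommRing R]
    {A : Matrix m n R} {s : ℕ}
    (hA : ∀ F : Finset n, F.card ≤ s → LinearIndependent R (fun j : F => Aᵀ j))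
    {Y : Matrix n p R} (hY : (rowSupport Y).ncard ≤ s) (hAY : A * Y = 0) : Y = 0 := by
  have hfin := (rowSupport Y).toFinite
  have hF : hfin.toFinset.card ≤ s := by rwa [← Set.ncard_eq_toFinset_card _ hfin]
  ext i j
  refine congrFun (eq_zero_of_mulVec_eq_zero_of_linearIndependent (hA _ hF)
    (y := Y.col j) (fun i hi => ?_) (congrArg (col · j) hAY)) i
  simp only [Set.Finite.mem_toFinset, mem_rowSupport, not_not] at hi
  simp [hi]

theorem eq_of_mul_eq_mul_of_ncard_rowSupport_le [Fintype n] [CommRing R]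
    {A : Matrix m n R} {k : ℕ}
    (hA : ∀ F : Finset n, F.card ≤ 2 * k → LinearIndependent R (fun j : F => Aᵀ j))
    {Y₁ Y₂ : Matrix n p R} (hY₁ : (rowSupport Y₁).ncard ≤ k) (hY₂ : (rowSupport Y₂).ncard ≤ k)
    (h : A * Y₁ = A * Y₂) : Y₁ = Y₂ := by
  refine sub_eq_zero.mp (eq_zero_of_mul_eq_zero_of_ncard_rowSupport_le hA ?_ ?_)
  · calc (rowSupport (Y₁ - Y₂)).ncard ≤ (rowSupport Y₁ ∪ rowSupport Y₂).ncard :=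
          Set.ncard_le_ncard (rowSupport_sub_subset Y₁ Y₂)
      _ ≤ (rowSupport Y₁).ncard + (rowSupport Y₂).ncard := Set.ncard_union_le _ _
      _ ≤ 2 * k := by omega
  · rw [Matrix.mul_sub, h, sub_self]

theorem exists_eq_mul_of_range_mulVecLin_le [Fintype n] [Fintype p] [CommSemiring R]
    {B : Matrix m n R} {C : Matrix m p R}
    (h : LinearMap.range B.mulVecLin ≤ LinearMap.range C.mulVecLin) :
    ∃ D : Matrix p n R, B = C * D := by
  classical
  choose d hd using fun j => h ⟨Pi.single j 1, rfl⟩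
  refine ⟨(of d)ᵀ, ?_⟩
  ext i j
  simpa [mulVec, dotProduct, mul_apply, Pi.single_apply, eq_comm] using congrFun (hd j) i

section StarOrderedField

variable [Fintype m] [Fintype n] [Field R] [PartialOrder R] [StarRing R] [StarOrderedRing R]

theorem range_mulVecLin_self_mul_conjTranspose (B : Matrix m n R) :
    LinearMap.range (B * Bᴴ).mulVecLin = LinearMap.range B.mulVecLin :=
  Submodule.eq_of_le_of_finrank_eq (by rw [mulVecLin_mul]; exact LinearMap.range_comp_le_range _ _)
    (rank_self_mul_conjTranspose B)

theorem exists_eq_mul_of_mul_conjTranspose_eq [Fintype p] {B : Matrix m n R}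
    {C : Matrix m p R} (h : B * Bᴴ = C * Cᴴ) : ∃ D : Matrix p n R, B = C * D :=
  exists_eq_mul_of_range_mulVecLin_le <| by
    rw [← range_mulVecLin_self_mul_conjTranspose B, h, range_mulVecLin_self_mul_conjTranspose]

end StarOrderedField

theorem sum_vecMulVec_star_eq_mul_conjTranspose [Fintype n] [Semiring R] [StarRing R]
    (v : n → m → R) : ∑ k, vecMulVec (v k) (star (v k)) = (of v)ᵀ * (of v)ᵀᴴ := by
  ext i j
  simp [sum_apply, vecMulVec_apply, mul_apply]

end Matrix

/-- Support recovery via the continuous-to-finite (CTF) block: from `Q = Σ zₙ zₙᴴ`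
factored as `Q = V Vᴴ`, (a) there is a solution of `A U = V` with row support in the
true joint support `S`, and (b) any row-sparsest solution of `A U = V` has row support
exactly `S`. -/
theorem CTF_support_recovery (M N m r k : ℕ) (A : Matrix (Fin M) (Fin N) ℂ)
    (hA : ∀ S : Finset (Fin N), S.card ≤ 2 * k →
      LinearIndependent ℂ (fun j : S => A.transpose j.val))
    (x : Fin m → (Fin N → ℂ))
    (S : Set (Fin N)) (hS : S = ⋃ n, Function.support (x n)) (hScard : S.ncard ≤ k)
    (z : Fin m → (Fin M → ℂ)) (hz : ∀ n, z n = A.mulVec (x n))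
    (Q : Matrix (Fin M) (Fin M) ℂ)
    (hQ : Q = ∑ n, Matrix.vecMulVec (z n) (fun j => starRingEnd ℂ (z n j)))
    (V : Matrix (Fin M) (Fin r) ℂ) (hV : V * V.conjTranspose = Q) :
    (∃ U₀ : Matrix (Fin N) (Fin r) ℂ, {i | U₀ i ≠ 0} ⊆ S ∧ A * U₀ = V) ∧
    (∀ U : Matrix (Fin N) (Fin r) ℂ, A * U = V →
      (∀ U' : Matrix (Fin N) (Fin r) ℂ, A * U' = V →
        {i | U i ≠ 0}.ncard ≤ {i | U' i ≠ 0}.ncard) →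
      {i | U i ≠ 0} = S) := by
  set X : Matrix (Fin N) (Fin m) ℂ := (of x)ᵀ
  set Z : Matrix (Fin M) (Fin m) ℂ := (of z)ᵀ
  have hZ : Z = A * X := by
    ext i n
    simp [Z, X, hz, mulVec, dotProduct, mul_apply]
  have hSX : S = rowSupport X := by rw [hS, rowSupport_transpose_of]
  have hQZ : Q = Z * Zᴴ := hQ.trans (sum_vecMulVec_star_eq_mul_conjTranspose z)
  open ComplexOrder in
  obtain ⟨C, hVC⟩ := exists_eq_mul_of_mul_conjTranspose_eq (hV.trans hQZ)
  open ComplexOrder in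
  obtain ⟨D, hZD⟩ := exists_eq_mul_of_mul_conjTranspose_eq (hQZ.symm.trans hV.symm)
  have hU₀S : rowSupport (X * C) ⊆ S := hSX ▸ rowSupport_mul_subset X C
  have hAU₀ : A * (X * C) = V := by rw [← Matrix.mul_assoc, ← hZ, hVC]
  refine ⟨⟨X * C, hU₀S, hAU₀⟩, fun U hAU hmin => ?_⟩
  have hUS : (rowSupport U).ncard ≤ S.ncard := (hmin _ hAU₀).trans (Set.ncard_le_ncard hU₀S)
  have hXUD : X = U * D :=
    eq_of_mul_eq_mul_of_ncard_rowSupport_le hA (hSX ▸ hScard)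
      ((Set.ncard_le_ncard (rowSupport_mul_subset U D)).trans (hUS.trans hScard))
      (by rw [← hZ, hZD, ← Matrix.mul_assoc, hAU])
  exact (Set.eq_of_subset_of_ncard_le (hSX ▸ hXUD ▸ rowSupport_mul_subset U D) hUS).symm
end
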